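/- arXiv:2412.03466 — 2 statements merged into one kernel-verified Lean document; each statement's English description precedes it below -/
import Mathlib

section
/- Let U(p) = exp(−i m σx) · exp(−i p σz) for real parameters m, p. Then U(p) is unitary and its eigenvalues have the form e^{−iE} with cos E = cos(m) cos(p). -/
open Matrix Complex

noncomputable def pauliX : Matrix (Fin 2) (Fin 2) ℂ := !![0, 1; 1, 0]
noncomputable def pauliZ : Matrix (Fin 2) (Fin 2) ℂ := !![1, 0; 0, -1]

noncomputable def diracWalkU (m p : ℝ) : Matrix (Fin 2) (Fin 2) ℂ :=
  NormedSpace.exp ((-Complex.I * m) • pauliX) * NormedSpace.exp ((-Complex.I * p) • pauliZ)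

/-!
Since `σ * σ = 1`, the exponential series splits into even and odd parts and
`exp (-I θ σ) = cos θ - I sin θ σ`. The walk operator is a product of exponentials of
skew-Hermitian matrices, hence unitary, and from the closed form `tr U = 2 cos m cos p` and
`det U = 1`. An eigenvalue `λ` is therefore a root of `λ² - 2 cos m cos p λ + 1`, whose roots are
`exp (∓ I arccos (cos m cos p))`.
-/

open NormedSpace Nat in
theorem NormedSpace.exp_smul_of_mul_self_eq_one {𝔸 : Type*} [NormedRing 𝔸] [NormedAlgebra ℂ 𝔸]
    [CompleteSpace 𝔸] {σ : 𝔸} (hσ : σ * σ = 1) (z : ℂ) :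
    exp (z • σ) = Complex.cosh z • (1 : 𝔸) + Complex.sinh z • σ := by
  have hpow_even (k : ℕ) : σ ^ (2 * k) = 1 := by rw [pow_mul, sq, hσ, one_pow]
  have hseries : HasSum (fun n : ℕ ↦ (z ^ n / n !) • σ ^ n)
      (Complex.cosh z • (1 : 𝔸) + Complex.sinh z • σ) := by
    refine HasSum.even_add_odd ?_ ?_
    · simpa [hpow_even] using (Complex.hasSum_cosh z).smul_const (1 : 𝔸)
    · simpa [pow_succ, hpow_even] using (Complex.hasSum_sinh z).smul_const σ
  refine (exp_series_hasSum_exp' (𝕂 := ℂ) (z • σ)).unique ?_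
  simpa [smul_pow, smul_smul, div_eq_inv_mul] using hseries

theorem NormedSpace.exp_neg_I_mul_smul_of_mul_self_eq_one {𝔸 : Type*} [NormedRing 𝔸]
    [NormedAlgebra ℂ 𝔸] [CompleteSpace 𝔸] {σ : 𝔸} (hσ : σ * σ = 1) (θ : ℂ) :
    NormedSpace.exp ((-I * θ) • σ) = Complex.cos θ • (1 : 𝔸) - (I * Complex.sin θ) • σ := by
  rw [NormedSpace.exp_smul_of_mul_self_eq_one hσ, neg_mul, Complex.cosh_neg, Complex.sinh_neg,
    mul_comm, Complex.cosh_mul_I, Complex.sinh_mul_I, neg_smul, mul_comm, sub_eq_add_neg]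

namespace Matrix

variable {n : Type*}

theorem IsHermitian.conjTranspose_neg_I_mul_smul {σ : Matrix n n ℂ} (hσ : σ.IsHermitian) (θ : ℝ) :
    ((-I * θ) • σ)ᴴ = -((-I * θ) • σ) := by
  rw [conjTranspose_smul, hσ.eq, ← neg_smul]
  simp

variable [Fintype n] [DecidableEq n]

theorem exp_neg_I_mul_smul_of_mul_self_eq_one {σ : Matrix n n ℂ} (hσ : σ * σ = 1) (θ : ℂ) :
    NormedSpace.exp ((-I * θ) • σ) = Complex.cos θ • (1 : Matrix n n ℂ) - (I * Complex.sin θ) • σ :=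
  letI := Matrix.linftyOpNormedRing (n := n) (α := ℂ)
  letI := Matrix.linftyOpNormedAlgebra (n := n) (R := ℂ) (α := ℂ)
  NormedSpace.exp_neg_I_mul_smul_of_mul_self_eq_one hσ θ

theorem exp_mem_unitaryGroup_of_conjTranspose_eq_neg {𝕜 : Type*} [RCLike 𝕜] {A : Matrix n n 𝕜}
    (hA : Aᴴ = -A) : NormedSpace.exp A ∈ unitaryGroup n 𝕜 := by
  rw [mem_unitaryGroup_iff, star_eq_conjTranspose, ← exp_conjTranspose, hA, exp_neg]
  exact mul_nonsing_inv _ ((isUnit_iff_isUnit_det _).mp (isUnit_exp A))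

theorem sq_sub_trace_mul_add_det_eq_zero_of_mulVec_eq_smul {K : Type*} [Field K]
    {A : Matrix (Fin 2) (Fin 2) K} {μ : K} {v : Fin 2 → K} (hv : v ≠ 0) (hAv : A *ᵥ v = μ • v) :
    μ ^ 2 - A.trace * μ + A.det = 0 := by
  have hdet : (A - μ • 1).det = 0 :=
    exists_mulVec_eq_zero_iff.mp ⟨v, hv, by rw [sub_mulVec, hAv, smul_mulVec, one_mulVec, sub_self]⟩
  rw [det_fin_two] at hdet ⊢
  simp [trace_fin_two] at hdet ⊢
  linear_combination hdet

end Matrix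

theorem Complex.exp_neg_I_mul_ofReal (t : ℝ) : exp (-I * t) = Real.cos t - Real.sin t * I := by
  rw [show -I * (t : ℂ) = ↑(-t) * I by push_cast; ring, exp_mul_I, ← ofReal_cos, ← ofReal_sin,
    Real.cos_neg, Real.sin_neg]
  push_cast
  ring

theorem Complex.exists_eq_exp_neg_I_mul_of_sq_sub_two_mul_add_one_eq_zero {c : ℝ}
    (hc₀ : -1 ≤ c) (hc₁ : c ≤ 1) {z : ℂ} (hz : z ^ 2 - 2 * c * z + 1 = 0) :
    ∃ E : ℝ, z = exp (-I * E) ∧ Real.cos E = c := by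
  set α := Real.arccos c
  have hcos : Real.cos α = c := Real.cos_arccos hc₀ hc₁
  have hpyth : (Real.sin α : ℂ) ^ 2 + (c : ℂ) ^ 2 = 1 := by
    exact_mod_cast hcos ▸ Real.sin_sq_add_cos_sq α
  have hfactor : (z - (c - Real.sin α * I)) * (z - (c + Real.sin α * I)) = 0 := by
    linear_combination hz + hpyth - (Real.sin α : ℂ) ^ 2 * I_sq
  rcases mul_eq_zero.mp hfactor with h | h
  · refine ⟨α, ?_, hcos⟩
    rw [exp_neg_I_mul_ofReal, hcos, ← sub_eq_zero, h]
  · refine ⟨-α, ?_, by rw [Real.cos_neg, hcos]⟩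
    rw [exp_neg_I_mul_ofReal, Real.cos_neg, Real.sin_neg, hcos, ← sub_eq_zero, ← h]
    push_cast
    ring

theorem pauliX_mul_self : pauliX * pauliX = 1 := by
  simp [pauliX, one_fin_two]

theorem pauliZ_mul_self : pauliZ * pauliZ = 1 := by
  simp [pauliZ, one_fin_two]

theorem pauliX_isHermitian : pauliX.IsHermitian := by
  ext i j
  fin_cases i <;> fin_cases j <;> simp [pauliX]

theorem pauliZ_isHermitian : pauliZ.IsHermitian := by
  ext i j
  fin_cases i <;> fin_cases j <;> simp [pauliZ]

theorem diracWalkU_mem_unitaryGroup (m p : ℝ) : diracWalkU m p ∈ unitaryGroup (Fin 2) ℂ :=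
  Submonoid.mul_mem _
    (exp_mem_unitaryGroup_of_conjTranspose_eq_neg
      (pauliX_isHermitian.conjTranspose_neg_I_mul_smul m))
    (exp_mem_unitaryGroup_of_conjTranspose_eq_neg
      (pauliZ_isHermitian.conjTranspose_neg_I_mul_smul p))

theorem diracWalkU_eq (m p : ℝ) :
    diracWalkU m p = (Complex.cos m • 1 - (I * Complex.sin m) • pauliX) *
      (Complex.cos p • 1 - (I * Complex.sin p) • pauliZ) := by
  rw [diracWalkU, exp_neg_I_mul_smul_of_mul_self_eq_one pauliX_mul_self,
    exp_neg_I_mul_smul_of_mul_self_eq_one pauliZ_mul_self]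

theorem trace_diracWalkU (m p : ℝ) : (diracWalkU m p).trace = 2 * (Real.cos m * Real.cos p) := by
  rw [diracWalkU_eq]
  simp [trace_fin_two, pauliX, pauliZ, one_fin_two]
  ring

theorem det_diracWalkU (m p : ℝ) : (diracWalkU m p).det = 1 := by
  rw [diracWalkU_eq, det_mul]
  have hX : (Complex.cos m • 1 - (I * Complex.sin m) • pauliX).det = 1 := by
    simp [det_fin_two, pauliX]
    linear_combination Complex.sin_sq_add_cos_sq (m : ℂ) - Complex.sin m ^ 2 * I_sq
  have hZ : (Complex.cos p • 1 - (I * Complex.sin p) • pauliZ).det = 1 := by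
    simp [det_fin_two, pauliZ]
    linear_combination Complex.sin_sq_add_cos_sq (p : ℂ) - Complex.sin p ^ 2 * I_sq
  rw [hX, hZ, one_mul]

theorem diracWalkU_unitary_and_eigenvalues (m p : ℝ) :
    (diracWalkU m p) * (diracWalkU m p)ᴴ = 1 ∧
    ∀ lam : ℂ, (∃ v : Fin 2 → ℂ, v ≠ 0 ∧ (diracWalkU m p).mulVec v = lam • v) →
      ∃ E : ℝ, lam = Complex.exp (-Complex.I * E) ∧ Real.cos E = Real.cos m * Real.cos p := by
  refine ⟨mem_unitaryGroup_iff.mp (diracWalkU_mem_unitaryGroup m p), ?_⟩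
  rintro lam ⟨v, hv, hlam⟩
  have hchar := sq_sub_trace_mul_add_det_eq_zero_of_mulVec_eq_smul hv hlam
  rw [trace_diracWalkU, det_diracWalkU] at hchar
  have hcos_mul_mem : Real.cos m * Real.cos p ∈ Set.Icc (-1) 1 := by
    rw [Set.mem_Icc, ← abs_le, abs_mul]
    exact mul_le_one₀ (Real.abs_cos_le_one m) (abs_nonneg _) (Real.abs_cos_le_one p)
  exact exists_eq_exp_neg_I_mul_of_sq_sub_two_mul_add_one_eq_zero hcos_mul_mem.1 hcos_mul_mem.2
    (by push_cast at hchar ⊢; linear_combination hchar)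
end

section
/- For any m with 0 ≤ m < π/2, there exists θ such that for all real p, cos(m)cos²(p) + sin²(p)cos(m + 2φ) > 0 where φ = π/2 − θ; consequently every E with cos E equal to this quantity and E ∈ [−π, π) satisfies |E| < π/2. -/
theorem exists_theta_energy_gap (m : ℝ) (hm0 : 0 ≤ m) (hm : m < Real.pi / 2) :
    ∃ θ : ℝ,
      (∀ p : ℝ,
        Real.cos m * (Real.cos p) ^ 2 +
          (Real.sin p) ^ 2 * Real.cos (m + 2 * (Real.pi / 2 - θ)) > 0) ∧
      (∀ E p : ℝ, -Real.pi ≤ E → E < Real.pi →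
        Real.cos E =
          Real.cos m * (Real.cos p) ^ 2 +
            (Real.sin p) ^ 2 * Real.cos (m + 2 * (Real.pi / 2 - θ)) →
        |E| < Real.pi / 2) := by
  refine ⟨Real.pi / 2, ?_, ?_⟩
  · intro p
    have h1 : m + 2 * (Real.pi / 2 - Real.pi / 2) = m := by ring
    rw [h1]
    have hcm : 0 < Real.cos m := Real.cos_pos_of_mem_Ioo
      ⟨lt_of_lt_of_le (by linarith [Real.pi_pos]) hm0, hm⟩
    nlinarith [Real.sin_sq_add_cos_sq p]
  · intro E p hE1 hE2 hcos
    have h1 : m + 2 * (Real.pi / 2 - Real.pi / 2) = m := by ring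
    rw [h1] at hcos
    have hcm : 0 < Real.cos m := Real.cos_pos_of_mem_Ioo
      ⟨lt_of_lt_of_le (by linarith [Real.pi_pos]) hm0, hm⟩
    have hpos : 0 < Real.cos E := by
      rw [hcos]; nlinarith [Real.sin_sq_add_cos_sq p]
    by_contra h
    push_neg at h
    have habs : Real.pi / 2 ≤ |E| := h
    rcases le_or_gt 0 E with h0 | h0
    · have : Real.pi / 2 ≤ E := by rwa [abs_of_nonneg h0] at habs
      have := Real.cos_nonpos_of_pi_div_two_le_of_le this (by linarith)
      linarith
    · have : Real.pi / 2 ≤ -E := by rwa [abs_of_neg h0] at habs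
      have := Real.cos_nonpos_of_pi_div_two_le_of_le this (by linarith)
      rw [Real.cos_neg] at this
      linarith
end
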